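/- For every natural number r ≥ 0, the kernel of the natural surjection F̄_{r+1} → F̄_r (i.e. the submodule J̄_r/J̄_{r+1} ⊆ F̄_{r+1}, which is well defined since J̄_{r+1} ⊆ J̄_r) equals the kernel of the endomorphism of F̄_{r+1} given by multiplication by β + (−1)^{r+1}·8. -/

import Mathlib

/-!
Let `b = β + (−1)^{r+1}·8`, so `R̄²_{r+1} = b·R̄¹_r`; the claim is `(J̄_{r+1} : b) = J̄_r`.
Multiplication by `b` maps `J̄_r` into `J̄_{r+1}`, since also
`r²·b·R̄²_r = b·R̄¹_{r+1} − α·R̄²_{r+1}`.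
Conversely, if `b·p = u·R̄¹_{r+1} + v·b·R̄¹_r`, specialise `β` to the root of `b`: there `R̄¹_{r+1}`
becomes a monic polynomial of degree `r+1` in `α`, so `u` vanishes on the line `b = 0` and is
divisible by `b`. Cancelling `b` expresses `p` through `R̄¹_{r+1}, R̄¹_r ∈ J̄_r`.
-/

open MvPolynomial

/-- The pair (R̄¹_r, R̄²_r) of polynomials in ℂ[α,β] (α = X 0, β = X 1), defined by
R̄¹_0 = 1, R̄²_0 = 0 and the recursion R̄¹_{r+1} = α·R̄¹_r + r²·R̄²_r,
R̄²_{r+1} = (β + (−1)^{r+1}·8)·R̄¹_r. -/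
noncomputable def Rb : ℕ → MvPolynomial (Fin 2) ℂ × MvPolynomial (Fin 2) ℂ
  | 0 => (1, 0)
  | (r + 1) =>
      (X 0 * (Rb r).1 + C ((r : ℂ) ^ 2) * (Rb r).2,
       (X 1 + C ((-1 : ℂ) ^ (r + 1) * 8)) * (Rb r).1)

/-- The ideal J̄_r = (R̄¹_r, R̄²_r) ⊆ ℂ[α,β]. -/
noncomputable def Jb (r : ℕ) : Ideal (MvPolynomial (Fin 2) ℂ) :=
  Ideal.span {(Rb r).1, (Rb r).2}

theorem MvPolynomial.X_sub_C_dvd_sub_aeval_update {σ R : Type*} [CommRing R] [DecidableEq σ]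
    (i : σ) (a : R) (p : MvPolynomial σ R) :
    X i - C a ∣ p - aeval (Function.update X i (C a)) p := by
  set I := Ideal.span {(X i - C a : MvPolynomial σ R)}
  have hcomp : (Ideal.Quotient.mkₐ R I).comp (aeval (Function.update X i (C a))) =
      Ideal.Quotient.mkₐ R I := by
    refine algHom_ext fun j => ?_
    rcases eq_or_ne j i with rfl | hj
    · simp only [AlgHom.comp_apply, aeval_X, Function.update_self, Ideal.Quotient.mkₐ_eq_mk]
      exact (Ideal.Quotient.eq.mpr (Ideal.mem_span_singleton_self _)).symm
    · simp [hj]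
  rw [← Ideal.mem_span_singleton, ← Ideal.Quotient.eq, ← Ideal.Quotient.mkₐ_eq_mk R,
    ← AlgHom.comp_apply, hcomp]

theorem Ideal.Quotient.setOf_factor_eq_zero_eq_image {R : Type*} [CommRing R] {I J : Ideal R}
    (h : I ≤ J) : {x : R ⧸ I | Ideal.Quotient.factor h x = 0} = Ideal.Quotient.mk I '' J := by
  ext x
  rw [Set.mem_image, Set.mem_ofPred_eq, ← RingHom.mem_ker, Ideal.Quotient.factor_ker,
    Ideal.mem_map_iff_of_surjective _ Ideal.Quotient.mk_surjective]
  rfl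

noncomputable def betaShift (r : ℕ) : MvPolynomial (Fin 2) ℂ :=
  X 1 + C ((-1 : ℂ) ^ r * 8)

theorem betaShift_succ (r : ℕ) : betaShift (r + 1) = X 1 - C ((-1 : ℂ) ^ r * 8) := by
  rw [betaShift, sub_eq_add_neg, ← map_neg, pow_succ]
  ring_nf

theorem betaShift_ne_zero (r : ℕ) : betaShift r ≠ 0 := fun h => by
  simpa [betaShift] using congrArg (eval fun _ => 1 - (-1 : ℂ) ^ r * 8) h

theorem Rb_succ_fst (r : ℕ) :
    (Rb (r + 1)).1 = X 0 * (Rb r).1 + C ((r : ℂ) ^ 2) * (Rb r).2 := rfl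

theorem Rb_succ_snd (r : ℕ) : (Rb (r + 1)).2 = betaShift (r + 1) * (Rb r).1 := rfl

theorem Rb_fst_mem_Jb (r : ℕ) : (Rb r).1 ∈ Jb r := Ideal.subset_span (Set.mem_insert _ _)

theorem Rb_snd_mem_Jb (r : ℕ) : (Rb r).2 ∈ Jb r :=
  Ideal.subset_span (Set.mem_insert_of_mem _ rfl)

theorem Rb_succ_fst_mem_Jb (r : ℕ) : (Rb (r + 1)).1 ∈ Jb r := by
  rw [Rb_succ_fst]
  exact add_mem (Ideal.mul_mem_left _ _ (Rb_fst_mem_Jb r))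
    (Ideal.mul_mem_left _ _ (Rb_snd_mem_Jb r))

noncomputable def evalβ (a : ℂ) : MvPolynomial (Fin 2) ℂ →ₐ[ℂ] Polynomial ℂ :=
  aeval ![Polynomial.X, Polynomial.C a]

theorem evalβ_Rb (a : ℂ) (s : ℕ) :
    (evalβ a (Rb s).1).Monic ∧ (evalβ a (Rb s).1).degree = s ∧
      (evalβ a (Rb s).2).degree < s := by
  induction s with
  | zero => simp [Rb]
  | succ s ih =>
    obtain ⟨hmonic, hdeg, hdeg₂⟩ := ih
    have hfst : evalβ a (Rb (s + 1)).1 =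
        evalβ a (Rb s).1 * Polynomial.X + (s : ℂ) ^ 2 • evalβ a (Rb s).2 := by
      simp [Rb, evalβ, mul_comm, Polynomial.smul_eq_C_mul]
    have hsnd : evalβ a (Rb (s + 1)).2 = (a + (-1) ^ (s + 1) * 8) • evalβ a (Rb s).1 := by
      simp [Rb, evalβ, Polynomial.smul_eq_C_mul]
    have hlt : (s : WithBot ℕ) < ↑(s + 1) := by exact_mod_cast s.lt_succ_self
    have hX : (evalβ a (Rb s).1 * Polynomial.X).degree = ↑(s + 1) := by
      rw [Polynomial.degree_mul_X, hdeg]; rfl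
    have hlow : ((s : ℂ) ^ 2 • evalβ a (Rb s).2).degree < ↑(s + 1) :=
      (Polynomial.degree_smul_le _ _).trans_lt (hdeg₂.trans hlt)
    refine ⟨?_, ?_, ?_⟩
    · rw [hfst]; exact (hmonic.mul Polynomial.monic_X).add_of_left (hX ▸ hlow)
    · rw [hfst, Polynomial.degree_add_eq_left_of_degree_lt (hX ▸ hlow), hX]
    · rw [hsnd]
      exact (Polynomial.degree_smul_le _ _).trans_lt (hdeg ▸ hlt)

theorem evalβ_aeval_update (a : ℂ) (p : MvPolynomial (Fin 2) ℂ) :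
    evalβ a (aeval (Function.update X 1 (C a)) p) = evalβ a p := by
  rw [← AlgHom.comp_apply]
  congr 1
  refine algHom_ext fun j => ?_
  fin_cases j <;> simp [evalβ]

theorem aeval_update_Rb_fst_ne_zero (a : ℂ) (s : ℕ) :
    aeval (Function.update X 1 (C a)) (Rb s).1 ≠ 0 := fun h =>
  (evalβ_Rb a s).1.ne_zero (by rw [← evalβ_aeval_update, h, map_zero])

theorem betaShift_mul_Rb_snd_mem_Jb (r : ℕ) : betaShift (r + 1) * (Rb r).2 ∈ Jb (r + 1) := by
  cases r with
  | zero => simp [Rb]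
  | succ s =>
    have hunit : IsUnit (C (((s + 1 : ℕ) : ℂ) ^ 2) : MvPolynomial (Fin 2) ℂ) :=
      (isUnit_iff_ne_zero.mpr (pow_ne_zero _ (Nat.cast_ne_zero.mpr s.succ_ne_zero))).map C
    have hcomb : C (((s + 1 : ℕ) : ℂ) ^ 2) * (betaShift (s + 2) * (Rb (s + 1)).2) =
        betaShift (s + 2) * (Rb (s + 2)).1 - X 0 * (Rb (s + 2)).2 := by
      rw [Rb_succ_fst (s + 1), Rb_succ_snd (s + 1)]; ring
    rw [← Ideal.unit_mul_mem_iff_mem _ hunit, hcomb]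
    exact sub_mem (Ideal.mul_mem_left _ _ (Rb_fst_mem_Jb _))
      (Ideal.mul_mem_left _ _ (Rb_snd_mem_Jb _))

theorem betaShift_mul_mem_Jb_succ {r : ℕ} {p : MvPolynomial (Fin 2) ℂ} (hp : p ∈ Jb r) :
    betaShift (r + 1) * p ∈ Jb (r + 1) := by
  obtain ⟨u, v, rfl⟩ := Ideal.mem_span_pair.mp hp
  rw [mul_add, mul_left_comm, mul_left_comm _ v, ← Rb_succ_snd]
  exact add_mem (Ideal.mul_mem_left _ _ (Rb_snd_mem_Jb _))
    (Ideal.mul_mem_left _ _ (betaShift_mul_Rb_snd_mem_Jb r))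

theorem mem_Jb_of_betaShift_mul_mem {r : ℕ} {p : MvPolynomial (Fin 2) ℂ}
    (hp : betaShift (r + 1) * p ∈ Jb (r + 1)) : p ∈ Jb r := by
  obtain ⟨u, v, huv⟩ := Ideal.mem_span_pair.mp hp
  rw [Rb_succ_snd] at huv
  obtain ⟨a, hb⟩ : ∃ a : ℂ, betaShift (r + 1) = X 1 - C a := ⟨_, betaShift_succ r⟩
  have hεb : aeval (Function.update X 1 (C a)) (betaShift (r + 1)) = 0 := by simp [hb]
  have hεu : aeval (Function.update X 1 (C a)) u = 0 := by
    have := congrArg (aeval (Function.update X 1 (C a))) huv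
    simp only [map_add, map_mul, hεb, zero_mul, mul_zero, add_zero] at this
    exact (mul_eq_zero.mp this).resolve_right (aeval_update_Rb_fst_ne_zero a (r + 1))
  obtain ⟨u', rfl⟩ : betaShift (r + 1) ∣ u := by
    simpa only [hεu, hb, sub_zero] using X_sub_C_dvd_sub_aeval_update (1 : Fin 2) a u
  have hp' : p = u' * (Rb (r + 1)).1 + v * (Rb r).1 :=
    mul_left_cancel₀ (betaShift_ne_zero (r + 1)) (by rw [← huv]; ring)
  rw [hp']
  exact add_mem (Ideal.mul_mem_left _ _ (Rb_succ_fst_mem_Jb r))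
    (Ideal.mul_mem_left _ _ (Rb_fst_mem_Jb r))

theorem betaShift_mul_mem_Jb_succ_iff (r : ℕ) (p : MvPolynomial (Fin 2) ℂ) :
    betaShift (r + 1) * p ∈ Jb (r + 1) ↔ p ∈ Jb r :=
  ⟨mem_Jb_of_betaShift_mul_mem, betaShift_mul_mem_Jb_succ⟩

/-- For every r ≥ 0, the kernel of the natural surjection F̄_{r+1} → F̄_r (i.e. the submodule
J̄_r/J̄_{r+1} ⊆ F̄_{r+1}, which is well defined since J̄_{r+1} ⊆ J̄_r) equals the kernel of the
endomorphism of F̄_{r+1} given by multiplication by β + (−1)^{r+1}·8. -/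
theorem stmt6 (r : ℕ) (h : Jb (r + 1) ≤ Jb r) :
    {x : MvPolynomial (Fin 2) ℂ ⧸ Jb (r + 1) |
        Ideal.Quotient.factor h x = 0}
      = {x : MvPolynomial (Fin 2) ℂ ⧸ Jb (r + 1) |
          Ideal.Quotient.mk (Jb (r + 1)) (X 1 + C ((-1 : ℂ) ^ (r + 1) * 8)) * x = 0} ∧
    {x : MvPolynomial (Fin 2) ℂ ⧸ Jb (r + 1) |
        Ideal.Quotient.factor h x = 0}
      = (Ideal.Quotient.mk (Jb (r + 1))) '' (Jb r) := by
  refine ⟨Set.ext fun x => ?_, Ideal.Quotient.setOf_factor_eq_zero_eq_image h⟩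
  obtain ⟨p, rfl⟩ := Ideal.Quotient.mk_surjective x
  simp only [Set.mem_ofPred_eq, Ideal.Quotient.factor_mk, Ideal.Quotient.eq_zero_iff_mem,
    ← map_mul]
  exact (betaShift_mul_mem_Jb_succ_iff r p).symm
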